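/- arXiv:2508.09391 — 4 statements merged into one kernel-verified Lean document; each statement's English description precedes it below -/
import Mathlib

section
/- Let F(x,y) = a x^4 + 4b x^3 y + 6c x^2 y^2 + 4d x y^3 + e y^4 be a binary quartic form over a commutative ring (or over ℚ), with invariants I = ae - 4bd + 3c^2 and J = ace + 2bcd - b^2 e - d^2 a - c^3, Hessian H_F(x,y) = (F_xx F_yy - F_xy^2)/144, and Jacobian covariant T_F(x,y) = -(F_x H_{F,y} - F_y H_{F,x})/8. Then the syzygy T_F(x,y)^2 = -4 H_F(x,y)^3 + I · H_F(x,y) · F(x,y)^2 - J · F(x,y)^3 holds identically as polynomials in x and y. -/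
open MvPolynomial
lemma pderiv_ofNat_aux (i : Fin 2) (n : ℕ) [n.AtLeastTwo] :
    pderiv i (OfNat.ofNat n : MvPolynomial (Fin 2) ℚ) = 0 := by
  have h : (OfNat.ofNat n : MvPolynomial (Fin 2) ℚ) = C (OfNat.ofNat n) :=
    (map_ofNat C n).symm
  rw [h, pderiv_C]

lemma pderiv_natCast_aux (i : Fin 2) (n : ℕ) :
    pderiv i ((n : ℕ) : MvPolynomial (Fin 2) ℚ) = 0 :=
  Derivation.map_natCast _ n

set_option maxHeartbeats 16000000 in

/-- The Cayley–Hermite syzygy for binary quartic forms: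
`T_F² = -4 H_F³ + I · H_F · F² - J · F³` identically as polynomials. -/
theorem binary_quartic_syzygy (a b c d e : ℚ) :
    let x : MvPolynomial (Fin 2) ℚ := X 0
    let y : MvPolynomial (Fin 2) ℚ := X 1
    let F : MvPolynomial (Fin 2) ℚ :=
      C a * x ^ 4 + 4 * C b * x ^ 3 * y + 6 * C c * x ^ 2 * y ^ 2 +
        4 * C d * x * y ^ 3 + C e * y ^ 4
    let H : MvPolynomial (Fin 2) ℚ :=
      C ((144 : ℚ)⁻¹) *
        (pderiv 0 (pderiv 0 F) * pderiv 1 (pderiv 1 F) - (pderiv 1 (pderiv 0 F)) ^ 2)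
    let T : MvPolynomial (Fin 2) ℚ :=
      C (-(8 : ℚ)⁻¹) * (pderiv 0 F * pderiv 1 H - pderiv 1 F * pderiv 0 H)
    let I : ℚ := a * e - 4 * b * d + 3 * c ^ 2
    let J : ℚ := a * c * e + 2 * b * c * d - b ^ 2 * e - d ^ 2 * a - c ^ 3
    T ^ 2 = -4 * H ^ 3 + C I * H * F ^ 2 - C J * F ^ 3 := by
  intro x y F H T I J
  have pd01 : pderiv (0 : Fin 2) y = 0 := pderiv_X_of_ne (by decide)
  have pd10 : pderiv (1 : Fin 2) x = 0 := pderiv_X_of_ne (by decide)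
  have pd00 : pderiv (0 : Fin 2) x = 1 := pderiv_X_self 0
  have pd11 : pderiv (1 : Fin 2) y = 1 := pderiv_X_self 1
  have e144 : (C ((144:ℚ)⁻¹) : MvPolynomial (Fin 2) ℚ) * 144 = 1 := by
    rw [← map_ofNat (C : ℚ →+* MvPolynomial (Fin 2) ℚ) 144, ← C_mul]
    norm_num
  have e8 : (C (-(8:ℚ)⁻¹) : MvPolynomial (Fin 2) ℚ) * (-8) = 1 := by
    rw [show ((-8 : MvPolynomial (Fin 2) ℚ)) = C (-8) by
      rw [map_neg, map_ofNat], ← C_mul]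
    norm_num
  set Hexp : MvPolynomial (Fin 2) ℚ :=
    (C a * C c - C b^2) * x^4 + (2 * C a * C d - 2 * C b * C c) * x^3*y
      + (C a * C e + 2 * C b * C d - 3 * C c^2) * x^2*y^2
      + (2 * C b * C e - 2 * C c * C d) * x*y^3
      + (C c * C e - C d^2) * y^4 with hHexp
  set Texp : MvPolynomial (Fin 2) ℚ :=
    (-2 * C b^3 + 3 * C a * C b * C c - C a^2 * C d) * x^6
      + (-6 * C b^2 * C c + 9 * C a * C c^2 - 2 * C a * C b * C d - C a^2 * C e) * x^5*y
      + (-10 * C b^2 * C d + 15 * C a * C c * C d - 5 * C a * C b * C e) * x^4*y^2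
      + (-10 * C b^2 * C e + 10 * C a * C d^2) * x^3*y^3
      + (10 * C b * C d^2 - 15 * C b * C c * C e + 5 * C a * C d * C e) * x^2*y^4
      + (6 * C c * C d^2 - 9 * C c^2 * C e + 2 * C b * C d * C e + C a * C e^2) * x*y^5
      + (2 * C d^3 - 3 * C c * C d * C e + C b * C e^2) * y^6 with hTexp
  have hH : H = Hexp := by
    have hS : pderiv 0 (pderiv 0 F) * pderiv 1 (pderiv 1 F) - (pderiv 1 (pderiv 0 F)) ^ 2
        = 144 * Hexp := by
      simp only [F, map_add, map_sub, map_mul, map_zero, pderiv_mul, pderiv_pow, pderiv_C,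
        pderiv_one, pderiv_natCast_aux, Nat.cast_ofNat, pderiv_ofNat_aux _ 2, pderiv_ofNat_aux _ 3, pderiv_ofNat_aux _ 4, pderiv_ofNat_aux _ 5, pderiv_ofNat_aux _ 6, pderiv_ofNat_aux _ 8, pderiv_ofNat_aux _ 9, pderiv_ofNat_aux _ 10, pderiv_ofNat_aux _ 12, pderiv_ofNat_aux _ 15, pderiv_ofNat_aux _ 16, pderiv_ofNat_aux _ 18, pderiv_ofNat_aux _ 20, pderiv_ofNat_aux _ 24, pderiv_ofNat_aux _ 30, pderiv_ofNat_aux _ 36, pderiv_ofNat_aux _ 48, pderiv_ofNat_aux _ 60, pderiv_ofNat_aux _ 72, pderiv_ofNat_aux _ 144,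
        pd00, pd11, pd01, pd10, smul_eq_mul, hHexp]
      ring
    show C ((144:ℚ)⁻¹) * _ = Hexp
    rw [hS, ← mul_assoc, e144, one_mul]
  have hT : T = Texp := by
    have hS : pderiv 0 F * pderiv 1 H - pderiv 1 F * pderiv 0 H = (-8) * Texp := by
      rw [hH]
      simp only [F, hHexp, map_add, map_sub, map_mul, map_zero, pderiv_mul, pderiv_pow,
        pderiv_C, pderiv_one, pderiv_natCast_aux, Nat.cast_ofNat, pderiv_ofNat_aux _ 2, pderiv_ofNat_aux _ 3, pderiv_ofNat_aux _ 4, pderiv_ofNat_aux _ 5, pderiv_ofNat_aux _ 6, pderiv_ofNat_aux _ 8, pderiv_ofNat_aux _ 9, pderiv_ofNat_aux _ 10, pderiv_ofNat_aux _ 12, pderiv_ofNat_aux _ 15, pderiv_ofNat_aux _ 16, pderiv_ofNat_aux _ 18, pderiv_ofNat_aux _ 20, pderiv_ofNat_aux _ 24, pderiv_ofNat_aux _ 30, pderiv_ofNat_aux _ 36, pderiv_ofNat_aux _ 48, pderiv_ofNat_aux _ 60, pderiv_ofNat_aux _ 72, pderiv_ofNat_aux _ 144,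
        pd00, pd11, pd01, pd10, smul_eq_mul, hTexp]
      ring
    show C (-(8:ℚ)⁻¹) * _ = Texp
    rw [hS, ← mul_assoc, e8, one_mul]
  rw [hT, hH]
  simp only [F, I, J, hHexp, hTexp, map_add, map_sub, map_mul, map_pow, map_ofNat, map_neg,
    map_one]
  ring
end

section
/- If F(x,y) is a squarefree binary quartic form over an algebraically closed field of characteristic 0, then F and its Hessian H_F = (F_xx F_yy - F_xy^2)/144 share no common nonconstant factor. Equivalently: if a linear form L divides both F and H_F, then L^2 divides F. -/
/-!
Since `p` is not a unit, the Nullstellensatz gives a point `v ≠ 0` where `p`, hence `F` and `H_F`,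
vanish. The identities `3 F_x² = 4 F F_xx - 48 y² H_F` and `3 F_y² = 4 F F_yy - 48 x² H_F` make
`v` a singular point of `F`, and Taylor expansion of `F` at `v` shows that the square of the
linear form `v₁ x - v₀ y` vanishing at `v` divides `F`, against squarefreeness.
-/

open MvPolynomial

namespace MvPolynomial

@[simp]
theorem pderiv_ofNat {R σ : Type*} [CommSemiring R] (i : σ) (n : ℕ) [n.AtLeastTwo] :
    pderiv i (no_index (OfNat.ofNat n) : MvPolynomial σ R) = 0 :=
  (pderiv i).map_natCast n

variable {K σ : Type*} [Field K] [IsAlgClosed K] [Finite σ]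

theorem dvd_X_pow_of_eval_ne_zero {p : MvPolynomial σ K} (hp : ∀ v ≠ 0, eval v p ≠ 0)
    (i : σ) : ∃ n, p ∣ X i ^ n := by
  have hrad : (X i : MvPolynomial σ K) ∈ (Ideal.span {p}).radical := by
    rw [← vanishingIdeal_zeroLocus_eq_radical (K := K), mem_vanishingIdeal_iff]
    intro v hv
    obtain rfl : v = 0 := by
      by_contra hv0
      exact hp v hv0 (hv p (Ideal.subset_span rfl))
    simp
  obtain ⟨n, hn⟩ := hrad
  exact ⟨n, Ideal.mem_span_singleton.mp hn⟩

theorem exists_ne_zero_eval_eq_zero {i j : σ} (hij : i ≠ j) {p : MvPolynomial σ K}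
    (hp : ¬IsUnit p) : ∃ v ≠ 0, eval v p = 0 := by
  classical
  by_contra! h
  obtain ⟨m, hm⟩ := dvd_X_pow_of_eval_ne_zero h i
  obtain ⟨n, hn⟩ := dvd_X_pow_of_eval_ne_zero h j
  obtain ⟨k, -, hk⟩ := (dvd_prime_pow X_prime m).mp hm
  have hk0 : k ≠ 0 := by
    rintro rfl
    exact hp (associated_one_iff_isUnit.mp (by simpa using hk))
  have hXij : (X i : MvPolynomial σ K) ∣ X j ^ n := (dvd_pow_self _ hk0).trans (hk.dvd'.trans hn)
  simpa [hij] using map_dvd (eval (Pi.single j 1)) hXij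

end MvPolynomial

section BinaryQuartic

variable {K : Type*}

noncomputable def binaryQuartic [CommRing K] (a b c d e : K) : MvPolynomial (Fin 2) K :=
  C a * X 0 ^ 4 + 4 * C b * X 0 ^ 3 * X 1 + 6 * C c * X 0 ^ 2 * X 1 ^ 2 +
    4 * C d * X 0 * X 1 ^ 3 + C e * X 1 ^ 4

noncomputable def quarticHessian [Field K] (F : MvPolynomial (Fin 2) K) : MvPolynomial (Fin 2) K :=
  C ((144 : K)⁻¹) *
    (pderiv 0 (pderiv 0 F) * pderiv 1 (pderiv 1 F) - (pderiv 1 (pderiv 0 F)) ^ 2)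

variable [Field K] (a b c d e : K) (v : Fin 2 → K)

theorem three_mul_eval_pderiv_zero_sq [CharZero K] :
    3 * eval v (pderiv 0 (binaryQuartic a b c d e)) ^ 2 =
      4 * eval v (binaryQuartic a b c d e) * eval v (pderiv 0 (pderiv 0 (binaryQuartic a b c d e)))
        - 48 * v 1 ^ 2 * eval v (quarticHessian (binaryQuartic a b c d e)) := by
  simp [binaryQuartic, quarticHessian]
  ring

theorem three_mul_eval_pderiv_one_sq [CharZero K] :
    3 * eval v (pderiv 1 (binaryQuartic a b c d e)) ^ 2 =
      4 * eval v (binaryQuartic a b c d e) * eval v (pderiv 1 (pderiv 1 (binaryQuartic a b c d e)))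
        - 48 * v 0 ^ 2 * eval v (quarticHessian (binaryQuartic a b c d e)) := by
  simp [binaryQuartic, quarticHessian]
  ring

theorem eval_pderiv_binaryQuartic_eq_zero [CharZero K]
    (hF : eval v (binaryQuartic a b c d e) = 0)
    (hH : eval v (quarticHessian (binaryQuartic a b c d e)) = 0) (i : Fin 2) :
    eval v (pderiv i (binaryQuartic a b c d e)) = 0 := by
  fin_cases i
  · simpa [hF, hH] using three_mul_eval_pderiv_zero_sq a b c d e v
  · simpa [hF, hH] using three_mul_eval_pderiv_one_sq a b c d e v

theorem sq_dvd_binaryQuartic_of_eval_pderiv_eq_zero (hv : v ≠ 0)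
    (hF : eval v (binaryQuartic a b c d e) = 0)
    (hF' : ∀ i, eval v (pderiv i (binaryQuartic a b c d e)) = 0) :
    (C (v 1) * X 0 - C (v 0) * X 1) ^ 2 ∣ binaryQuartic a b c d e := by
  set L : MvPolynomial (Fin 2) K := C (v 1) * X 0 - C (v 0) * X 1
  obtain hv₁ | hv₀ : v 1 ≠ 0 ∨ v 0 ≠ 0 := by
    by_contra! h
    exact hv (funext fun i => by fin_cases i <;> simp [h])
  -- Taylor expansion of `β⁴ F(x, y) = F(α y + L, β y)` in `L`, where `v = (α, β)`;
  -- the second case is the mirror image.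
  · have key : C (v 1 ^ 4) * binaryQuartic a b c d e =
        L ^ 2 * (C (a * v 1 ^ 2) * X 0 ^ 2 + C (2 * a * v 0 * v 1 + 4 * b * v 1 ^ 2) * X 0 * X 1
            + C (3 * a * v 0 ^ 2 + 8 * b * v 0 * v 1 + 6 * c * v 1 ^ 2) * X 1 ^ 2)
          + C (eval v (pderiv 0 (binaryQuartic a b c d e))) * X 1 ^ 3 * L
          + C (eval v (binaryQuartic a b c d e)) * X 1 ^ 4 := by
      simp [L, binaryQuartic, map_ofNat C]
      ring
    simp only [hF, hF' 0, map_zero, zero_mul, add_zero] at key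
    exact ((pow_ne_zero 4 hv₁).isUnit.map C).dvd_mul_left.mp (Dvd.intro _ key.symm)
  · have key : C (v 0 ^ 4) * binaryQuartic a b c d e =
        L ^ 2 * (C (e * v 0 ^ 2) * X 1 ^ 2 + C (2 * e * v 1 * v 0 + 4 * d * v 0 ^ 2) * X 1 * X 0
            + C (3 * e * v 1 ^ 2 + 8 * d * v 1 * v 0 + 6 * c * v 0 ^ 2) * X 0 ^ 2)
          - C (eval v (pderiv 1 (binaryQuartic a b c d e))) * X 0 ^ 3 * L
          + C (eval v (binaryQuartic a b c d e)) * X 0 ^ 4 := by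
      simp [L, binaryQuartic, map_ofNat C]
      ring
    simp only [hF, hF' 1, map_zero, zero_mul, sub_zero, add_zero] at key
    exact ((pow_ne_zero 4 hv₀).isUnit.map C).dvd_mul_left.mp (Dvd.intro _ key.symm)

end BinaryQuartic

/-- If `F` is a squarefree binary quartic over an algebraically closed field of
characteristic zero, then `F` and its Hessian `H_F` share no common nonconstant factor. -/
theorem squarefree_quartic_coprime_hessian (K : Type*) [Field K] [IsAlgClosed K]
    [CharZero K] (a b c d e : K) :
    let x : MvPolynomial (Fin 2) K := X 0
    let y : MvPolynomial (Fin 2) K := X 1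
    let F : MvPolynomial (Fin 2) K :=
      C a * x ^ 4 + 4 * C b * x ^ 3 * y + 6 * C c * x ^ 2 * y ^ 2 +
        4 * C d * x * y ^ 3 + C e * y ^ 4
    let H : MvPolynomial (Fin 2) K :=
      C ((144 : K)⁻¹) *
        (pderiv 0 (pderiv 0 F) * pderiv 1 (pderiv 1 F) - (pderiv 1 (pderiv 0 F)) ^ 2)
    Squarefree F → ∀ p : MvPolynomial (Fin 2) K, p ∣ F → p ∣ H → IsUnit p := by
  intro _ _ F H hF p hpF hpH
  by_contra hp
  obtain ⟨v, hv, hpv⟩ := exists_ne_zero_eval_eq_zero (zero_ne_one : (0 : Fin 2) ≠ 1) hp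
  have hFv : eval v F = 0 := zero_dvd_iff.mp (hpv ▸ map_dvd (eval v) hpF)
  have hHv : eval v H = 0 := zero_dvd_iff.mp (hpv ▸ map_dvd (eval v) hpH)
  have hL := sq_dvd_binaryQuartic_of_eval_pderiv_eq_zero a b c d e v hv hFv
    (eval_pderiv_binaryQuartic_eq_zero a b c d e v hFv hHv)
  have hLu : IsUnit (C (v 1) * X 0 - C (v 0) * X 1 : MvPolynomial (Fin 2) K) :=
    hF _ (by rwa [← sq])
  simpa [mul_comm] using hLu.map (eval v)
end

section
/- Let χ₁ and χ₂ be completely multiplicative arithmetic functions, χ = χ₁·χ₂, and define ε(n) = Σ_{d | n} χ₁(d) χ₂(n/d). Then for all positive integers n and m, ε(nm) = Σ_{c | gcd(n,m)} μ(c) χ(c) ε(n/c) ε(m/c). -/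
/-!
Both sides are multiplicative in the pair `(n, m)`: if `n₁ m₁` is coprime to `n₂ m₂`, the value
at `(n₁ n₂, m₁ m₂)` is the product of the values at `(n₁, m₁)` and `(n₂, m₂)`. For the left side
this is the multiplicativity of the Dirichlet convolution `ε = χ₁ ∗ χ₂`; for the right side it
comes from `gcd (n₁ n₂) (m₁ m₂) = gcd n₁ m₁ * gcd n₂ m₂` and the multiplicativity of `μ χ`. So it
suffices to take `n = p ^ a`, `m = p ^ b`. There only `c = 1` and `c = p` contribute, and with
`x = χ₁ p`, `y = χ₂ p` the sequence `e k = ε (p ^ k) = ∑_{i ≤ k} x ^ i y ^ (k - i)` satisfies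
`e (k + 2) = (x + y) e (k + 1) - x y e k`; the claim becomes the addition formula
`e (a + b + 2) = e (a + 1) e (b + 1) - x y e a e b` of this recurrence.
-/

open scoped ArithmeticFunction.Moebius

open Finset

variable {R : Type*}

theorem Nat.Coprime.sum_divisors_mul_eq_sum_product [AddCommMonoid R] {m n : ℕ}
    (hmn : m.Coprime n) (f : ℕ → R) :
    ∑ d ∈ (m * n).divisors, f d = ∑ p ∈ m.divisors ×ˢ n.divisors, f (p.1 * p.2) := by
  rw [hmn.divisors_mul, sum_map]
  exact sum_attach _ fun p : ℕ × ℕ => f (p.1 * p.2)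

theorem Nat.gcd_mul_mul_of_coprime {n₁ m₁ n₂ m₂ : ℕ} (h : (n₁ * m₁).Coprime (n₂ * m₂)) :
    (n₁ * n₂).gcd (m₁ * m₂) = n₁.gcd m₁ * n₂.gcd m₂ := by
  rw [Nat.Coprime.gcd_mul _ (h.of_dvd (dvd_mul_left _ _) (dvd_mul_left _ _)),
    Nat.Coprime.gcd_mul_right_cancel _ (h.of_dvd (dvd_mul_left _ _) (dvd_mul_right _ _)).symm,
    Nat.Coprime.gcd_mul_left_cancel _ (h.of_dvd (dvd_mul_right _ _) (dvd_mul_left _ _))]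

theorem sum_divisors_prime_pow_moebius_mul [CommRing R] {p k : ℕ} (hp : p.Prime) (hk : k ≠ 0)
    (f : ℕ → R) : ∑ c ∈ (p ^ k).divisors, (μ c : R) * f c = f 1 - f p := by
  obtain ⟨j, rfl⟩ := Nat.exists_eq_succ_of_ne_zero hk
  rw [Nat.sum_divisors_prime_pow hp, sum_range_succ', sum_range_succ', sum_eq_zero]
  · rw [zero_add, pow_one, pow_zero, ArithmeticFunction.moebius_apply_prime hp,
      ArithmeticFunction.moebius_apply_one]
    push_cast
    ring
  · intro i _
    rw [ArithmeticFunction.moebius_apply_prime_pow hp (by omega), if_neg (by omega)]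
    simp

theorem recurrence_apply_add_add_two [CommRing R] {u : ℕ → R} {s q : R} (h₀ : u 0 = 1)
    (h₁ : u 1 = s) (h : ∀ k, u (k + 2) = s * u (k + 1) - q * u k) (a b : ℕ) :
    u (a + b + 2) = u (a + 1) * u (b + 1) - q * u a * u b := by
  induction b generalizing a with
  | zero => rw [h, h₀, h₁]; ring
  | succ b ih =>
    rw [show a + (b + 1) + 2 = a + 1 + b + 2 by ring, ih, h a, h b]
    ring

def IsMultiplicative₂ [Mul R] (F : ℕ → ℕ → R) : Prop :=
  ∀ ⦃n₁ m₁ n₂ m₂ : ℕ⦄, (n₁ * m₁).Coprime (n₂ * m₂) → F (n₁ * n₂) (m₁ * m₂) = F n₁ m₁ * F n₂ m₂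

theorem IsMultiplicative₂.eq_of_eq_on_prime_pow [Mul R] {F G : ℕ → ℕ → R}
    (hF : IsMultiplicative₂ F) (hG : IsMultiplicative₂ G)
    (h : ∀ p : ℕ, p.Prime → ∀ a b : ℕ, F (p ^ a) (p ^ b) = G (p ^ a) (p ^ b))
    {n m : ℕ} (hn : n ≠ 0) (hm : m ≠ 0) : F n m = G n m := by
  induction hk : n * m using Nat.strong_induction_on generalizing n m with
  | _ k ih =>
    by_cases h1 : n * m = 1
    · obtain ⟨rfl, rfl⟩ := mul_eq_one.mp h1
      simpa using h 2 Nat.prime_two 0 0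
    obtain ⟨p, hp, hpnm⟩ := Nat.exists_prime_and_dvd h1
    obtain ⟨a, n', hpn', rfl⟩ := Nat.exists_eq_pow_mul_and_not_dvd hn p hp.ne_one
    obtain ⟨b, m', hpm', rfl⟩ := Nat.exists_eq_pow_mul_and_not_dvd hm p hp.ne_one
    have hpnm' : ¬p ∣ n' * m' := by simp [hp.dvd_mul, hpn', hpm']
    have hk' : k = p ^ (a + b) * (n' * m') := by rw [← hk, pow_add]; ring
    have hab : a + b ≠ 0 := by
      rintro hab
      rw [hk, hk', hab, pow_zero, one_mul] at hpnm
      exact hpnm' hpnm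
    have hcop : (p ^ a * p ^ b).Coprime (n' * m') :=
      pow_add p a b ▸ Nat.Coprime.pow_left _ (hp.coprime_iff_not_dvd.2 hpnm')
    have hlt : n' * m' < k := hk' ▸ lt_mul_left
      (Nat.pos_of_ne_zero (mul_ne_zero (right_ne_zero_of_mul hn) (right_ne_zero_of_mul hm)))
      (Nat.one_lt_pow hab hp.one_lt)
    rw [hF hcop, hG hcop, h p hp,
      ih _ hlt (right_ne_zero_of_mul hn) (right_ne_zero_of_mul hm) rfl]

theorem isMultiplicative₂_comp_mul [CommMonoid R] {g : ℕ → R}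
    (hg : ∀ {a b : ℕ}, a.Coprime b → g (a * b) = g a * g b) :
    IsMultiplicative₂ fun n m => g (n * m) := by
  intro n₁ m₁ n₂ m₂ h
  simp only [mul_mul_mul_comm n₁ n₂, hg h]

theorem isMultiplicative₂_sum_divisors_gcd [CommSemiring R] {f g : ℕ → R}
    (hf : ∀ {a b : ℕ}, a.Coprime b → f (a * b) = f a * f b)
    (hg : ∀ {a b : ℕ}, a.Coprime b → g (a * b) = g a * g b) :
    IsMultiplicative₂ fun n m => ∑ c ∈ (n.gcd m).divisors, f c * g (n / c) * g (m / c) := by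
  intro n₁ m₁ n₂ m₂ h
  dsimp only
  have hn : n₁.Coprime n₂ := h.of_dvd (dvd_mul_right _ _) (dvd_mul_right _ _)
  have hm : m₁.Coprime m₂ := h.of_dvd (dvd_mul_left _ _) (dvd_mul_left _ _)
  rw [Nat.gcd_mul_mul_of_coprime h,
    (hn.of_dvd (Nat.gcd_dvd_left _ _) (Nat.gcd_dvd_left _ _)).sum_divisors_mul_eq_sum_product,
    sum_mul_sum, ← sum_product']
  refine sum_congr rfl fun c hc => ?_
  simp only [mem_product, Nat.mem_divisors] at hc
  obtain ⟨⟨hc₁, -⟩, hc₂, -⟩ := hc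
  have hc₁n := hc₁.trans (Nat.gcd_dvd_left _ _)
  have hc₁m := hc₁.trans (Nat.gcd_dvd_right _ _)
  have hc₂n := hc₂.trans (Nat.gcd_dvd_left _ _)
  have hc₂m := hc₂.trans (Nat.gcd_dvd_right _ _)
  rw [← Nat.div_mul_div_comm hc₁n hc₂n, ← Nat.div_mul_div_comm hc₁m hc₂m, hf (hn.of_dvd hc₁n hc₂n),
    hg (hn.of_dvd (Nat.div_dvd_of_dvd hc₁n) (Nat.div_dvd_of_dvd hc₂n)),
    hg (hm.of_dvd (Nat.div_dvd_of_dvd hc₁m) (Nat.div_dvd_of_dvd hc₂m))]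
  ring

section EisensteinCoeff

variable [CommRing R] (χ₁ χ₂ : ℕ →* R)

def eisensteinCoeff (n : ℕ) : R := ∑ d ∈ n.divisors, χ₁ d * χ₂ (n / d)

theorem eisensteinCoeff_one : eisensteinCoeff χ₁ χ₂ 1 = 1 := by
  simp [eisensteinCoeff]

theorem eisensteinCoeff_mul_of_coprime {a b : ℕ} (hab : a.Coprime b) :
    eisensteinCoeff χ₁ χ₂ (a * b) = eisensteinCoeff χ₁ χ₂ a * eisensteinCoeff χ₁ χ₂ b := by
  rw [eisensteinCoeff, hab.sum_divisors_mul_eq_sum_product, eisensteinCoeff, eisensteinCoeff,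
    sum_mul_sum, ← sum_product']
  refine sum_congr rfl fun d hd => ?_
  simp only [mem_product, Nat.mem_divisors] at hd
  rw [map_mul, ← Nat.div_mul_div_comm hd.1.1 hd.2.1, map_mul]
  ring

variable {χ₁ χ₂} {p : ℕ}

theorem eisensteinCoeff_prime_pow (hp : p.Prime) (k : ℕ) :
    eisensteinCoeff χ₁ χ₂ (p ^ k) = ∑ i ∈ range (k + 1), χ₁ p ^ i * χ₂ p ^ (k - i) := by
  rw [eisensteinCoeff, Nat.sum_divisors_prime_pow hp]
  refine sum_congr rfl fun i hi => ?_
  rw [Nat.pow_div (Nat.lt_succ_iff.mp (mem_range.mp hi)) hp.pos, map_pow, map_pow]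

theorem eisensteinCoeff_prime_pow_succ (hp : p.Prime) (k : ℕ) :
    eisensteinCoeff χ₁ χ₂ (p ^ (k + 1)) =
      χ₂ p * eisensteinCoeff χ₁ χ₂ (p ^ k) + χ₁ p ^ (k + 1) := by
  rw [eisensteinCoeff_prime_pow hp, eisensteinCoeff_prime_pow hp, sum_range_succ, mul_sum,
    Nat.sub_self, pow_zero, mul_one]
  congr 1
  refine sum_congr rfl fun i hi => ?_
  rw [Nat.sub_add_comm (Nat.lt_succ_iff.mp (mem_range.mp hi)), pow_succ]
  ring

theorem eisensteinCoeff_prime_pow_add_two (hp : p.Prime) (k : ℕ) :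
    eisensteinCoeff χ₁ χ₂ (p ^ (k + 2)) = (χ₁ p + χ₂ p) * eisensteinCoeff χ₁ χ₂ (p ^ (k + 1)) -
      χ₁ p * χ₂ p * eisensteinCoeff χ₁ χ₂ (p ^ k) := by
  linear_combination eisensteinCoeff_prime_pow_succ (χ₁ := χ₁) (χ₂ := χ₂) hp (k + 1) -
    χ₁ p * eisensteinCoeff_prime_pow_succ (χ₁ := χ₁) (χ₂ := χ₂) hp k

theorem eisensteinCoeff_prime_pow_add (hp : p.Prime) (a b : ℕ) :
    eisensteinCoeff χ₁ χ₂ (p ^ (a + b)) = ∑ c ∈ ((p ^ a).gcd (p ^ b)).divisors,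
      (μ c : R) * (χ₁ c * χ₂ c) * eisensteinCoeff χ₁ χ₂ (p ^ a / c) *
        eisensteinCoeff χ₁ χ₂ (p ^ b / c) := by
  rcases a with _ | a
  · simp [eisensteinCoeff_one]
  rcases b with _ | b
  · simp [eisensteinCoeff_one]
  obtain ⟨k, hk⟩ : ∃ k, (p ^ (a + 1)).gcd (p ^ (b + 1)) = p ^ (k + 1) := by
    rcases le_total a b with h | h
    · exact ⟨a, Nat.gcd_eq_left (Nat.pow_dvd_pow p (by omega))⟩
    · exact ⟨b, Nat.gcd_eq_right (Nat.pow_dvd_pow p (by omega))⟩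
  have hp₁ : eisensteinCoeff χ₁ χ₂ (p ^ 1) = χ₁ p + χ₂ p := by
    rw [eisensteinCoeff_prime_pow_succ hp, pow_zero, eisensteinCoeff_one]
    ring
  have hdiv (j : ℕ) : p ^ (j + 1) / p = p ^ j := Nat.div_eq_of_eq_mul_left hp.pos (pow_succ p j)
  have := recurrence_apply_add_add_two (u := fun k => eisensteinCoeff χ₁ χ₂ (p ^ k))
    (eisensteinCoeff_one χ₁ χ₂) hp₁ (eisensteinCoeff_prime_pow_add_two hp) a b
  simp_rw [hk, mul_assoc (μ _ : R), sum_divisors_prime_pow_moebius_mul hp k.succ_ne_zero,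
    Nat.div_one, map_one, hdiv]
  rw [show a + 1 + (b + 1) = a + b + 2 by ring, this]
  ring

end EisensteinCoeff

/-- Multiplicativity relation for the Eisenstein coefficient
`ε(n) = Σ_{d ∣ n} χ₁(d) χ₂(n/d)`:
`ε(nm) = Σ_{c ∣ gcd(n,m)} μ(c) χ(c) ε(n/c) ε(m/c)` where `χ = χ₁·χ₂`. -/
theorem eisenstein_coeff_mult (χ₁ χ₂ : ℕ → ℂ)
    (h₁ : χ₁ 1 = 1) (h₂ : χ₂ 1 = 1)
    (hm₁ : ∀ m n : ℕ, χ₁ (m * n) = χ₁ m * χ₁ n)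
    (hm₂ : ∀ m n : ℕ, χ₂ (m * n) = χ₂ m * χ₂ n)
    (ε : ℕ → ℂ) (hε : ∀ n : ℕ, ε n = ∑ d ∈ n.divisors, χ₁ d * χ₂ (n / d))
    (n m : ℕ) (hn : 0 < n) (hm : 0 < m) :
    ε (n * m) =
      ∑ c ∈ (Nat.gcd n m).divisors,
        (μ c : ℂ) * (χ₁ c * χ₂ c) * ε (n / c) * ε (m / c) := by
  let ψ₁ : ℕ →* ℂ := ⟨⟨χ₁, h₁⟩, hm₁⟩
  let ψ₂ : ℕ →* ℂ := ⟨⟨χ₂, h₂⟩, hm₂⟩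
  obtain rfl : ε = eisensteinCoeff ψ₁ ψ₂ := funext hε
  have hμχ {a b : ℕ} (hab : a.Coprime b) :
      (μ (a * b) : ℂ) * (χ₁ (a * b) * χ₂ (a * b)) =
        (μ a : ℂ) * (χ₁ a * χ₂ a) * ((μ b : ℂ) * (χ₁ b * χ₂ b)) := by
    push_cast [ArithmeticFunction.isMultiplicative_moebius.map_mul_of_coprime hab, hm₁, hm₂]
    ring
  have hε_mul {a b : ℕ} (hab : a.Coprime b) := eisensteinCoeff_mul_of_coprime ψ₁ ψ₂ hab
  refine IsMultiplicative₂.eq_of_eq_on_prime_pow (isMultiplicative₂_comp_mul hε_mul)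
    (isMultiplicative₂_sum_divisors_gcd hμχ hε_mul) (fun p hp a b => ?_) hn.ne' hm.ne'
  rw [← pow_add]
  exact eisensteinCoeff_prime_pow_add hp a b
end

section
/- For every real number y with -1 ≤ y ≤ 2, the inequality 1 + y/2 - √(1+y) ≥ 0.066·y² holds. -/
/-- For `-1 ≤ y ≤ 2`, `1 + y/2 - √(1+y) ≥ 0.066·y²`. -/
theorem sqrt_ineq_delta (y : ℝ) (h1 : -1 ≤ y) (h2 : y ≤ 2) :
    1 + y / 2 - Real.sqrt (1 + y) ≥ 0.066 * y ^ 2 := by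
  set s := Real.sqrt (1 + y) with hsdef
  have hs0 : 0 ≤ s := Real.sqrt_nonneg _
  have hs : s ^ 2 = 1 + y := Real.sq_sqrt (by linarith)
  have hsle : s ≤ 1.74 := by nlinarith
  have key : (0:ℝ) ≤ 0.5 - 0.066 * (s + 1) ^ 2 := by nlinarith
  nlinarith [mul_nonneg (sq_nonneg (s - 1)) key]
end
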